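/- Let G be a connected finite weighted graph with positive edge weights, and let u and v be two vertices of G that have a common distance-preserving spanning tree in G. Let P = (u = v_0, v_1, ..., v_k = v) be the unique shortest u-v path in G, and for 0 ≤ i ≤ k let V_i = {x ∈ V(G) : d_G(x, v_i) = d_G(x, V(P))}. Then the sets V_0, V_1, ..., V_k are pairwise disjoint and their union is V(G); that is, they form a partition of the vertex set of G. -/

import Mathlib

open SimpleGraph

/-- The weighted length of a walk: the sum of the weights of its edges. -/
def SimpleGraph.Walk.wlength {V : Type*} {G : SimpleGraph V} (w : V → V → ℝ) {x y : V}
    (p : G.Walk x y) : ℝ :=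
  (p.darts.map fun d => w d.toProd.1 d.toProd.2).sum

/-- The weighted distance between two vertices: the minimum weighted length of a walk. -/
noncomputable def SimpleGraph.wdist {V : Type*} (G : SimpleGraph V) (w : V → V → ℝ)
    (x y : V) : ℝ :=
  sInf {r : ℝ | ∃ p : G.Walk x y, p.wlength w = r}

/-- The weighted distance from a vertex to a set of vertices. -/
noncomputable def SimpleGraph.wdistS {V : Type*} (G : SimpleGraph V) (w : V → V → ℝ)
    (x : V) (S : Set V) : ℝ :=
  sInf (G.wdist w x '' S)

/-- `Vset G w P i` is the set of vertices whose nearest vertex on the walk `P` is `P.getVert i`,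
i.e. `V_i = {x : d_G(x, v_i) = d_G(x, V(P))}`. -/
def Vset {V : Type*} (G : SimpleGraph V) (w : V → V → ℝ) {u v : V} (P : G.Walk u v)
    (i : ℕ) : Set V :=
  {x : V | G.wdist w x (P.getVert i) = G.wdistS w x {z | z ∈ P.support}}

/-!
The `u`–`v` path of `T` has weight `d_T(u, v) = d_G(u, v)`, so it is the unique shortest path `P`.
For a vertex `x`, the `T`-paths from `u` and from `v` to `x` meet at a median `m ∈ P` with
`d(u, x) = d(u, m) + d(m, x)` and `d(v, x) = d(v, m) + d(m, x)`, in `T` and hence in `G`.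
If `y ∈ P` is at least as close to `x` as `m`, the triangle inequality gives `d(u, m) ≤ d(u, y)` and
`d(v, m) ≤ d(v, y)`; as `y` and `m` both lie on the geodesic `P`, this forces `y = m`. So `m` is
the only nearest vertex of `P` to `x`, and the sets `V_i` are disjoint. They cover `V(G)` because
some vertex of `P` is nearest to `x`.
-/

namespace SimpleGraph

variable {V : Type*} {G : SimpleGraph V} {w : V → V → ℝ}

namespace Walk

@[simp]
lemma wlength_nil {x : V} : (nil : G.Walk x x).wlength w = 0 := rfl

@[simp]
lemma wlength_cons {x y z : V} (h : G.Adj x y) (p : G.Walk y z) :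
    (cons h p).wlength w = w x y + p.wlength w := by
  simp [wlength]

@[simp]
lemma wlength_append {x y z : V} (p : G.Walk x y) (q : G.Walk y z) :
    (p.append q).wlength w = p.wlength w + q.wlength w := by
  simp [wlength, darts_append]

@[simp]
lemma wlength_mapLe {H : SimpleGraph V} (hGH : G ≤ H) {x y : V} (p : G.Walk x y) :
    (p.mapLe hGH).wlength w = p.wlength w := by
  induction p with
  | nil => rfl
  | cons h p ih => simpa [mapLe] using ih

lemma wlength_nonneg (hpos : ∀ a b, G.Adj a b → 0 < w a b) {x y : V} (p : G.Walk x y) :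
    0 ≤ p.wlength w := by
  induction p with
  | nil => simp
  | cons h p ih => rw [wlength_cons]; exact add_nonneg (hpos _ _ h).le ih

lemma wlength_bypass_le [DecidableEq V] (hpos : ∀ a b, G.Adj a b → 0 < w a b) {x y : V}
    (p : G.Walk x y) : p.bypass.wlength w ≤ p.wlength w := by
  induction p with
  | nil => simp [bypass]
  | cons h p ih =>
    simp only [bypass]
    split_ifs with hs
    · have hsplit := congrArg (wlength w) (p.bypass.take_spec hs)
      rw [wlength_append] at hsplit
      have := wlength_nonneg hpos (p.bypass.takeUntil _ hs)
      have := (hpos _ _ h).le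
      rw [wlength_cons]
      linarith
    · simpa using ih

end Walk

lemma wdist_le_wlength (hpos : ∀ a b, G.Adj a b → 0 < w a b) {x y : V} (p : G.Walk x y) :
    G.wdist w x y ≤ p.wlength w :=
  csInf_le ⟨0, by rintro r ⟨q, rfl⟩; exact q.wlength_nonneg hpos⟩ ⟨p, rfl⟩

lemma wdist_nonneg (hpos : ∀ a b, G.Adj a b → 0 < w a b) (x y : V) : 0 ≤ G.wdist w x y :=
  Real.sInf_nonneg (by rintro _ ⟨p, rfl⟩; exact p.wlength_nonneg hpos)

lemma le_wdist {x y : V} (h : G.Reachable x y) {r : ℝ}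
    (hr : ∀ p : G.Walk x y, r ≤ p.wlength w) : r ≤ G.wdist w x y :=
  le_csInf (h.elim fun p => ⟨_, p, rfl⟩) (by rintro _ ⟨p, rfl⟩; exact hr p)

lemma exists_isPath_wlength_eq_wdist [Finite V] (hpos : ∀ a b, G.Adj a b → 0 < w a b)
    {x y : V} (h : G.Reachable x y) :
    ∃ p : G.Walk x y, p.IsPath ∧ p.wlength w = G.wdist w x y := by
  classical
  have := Fintype.ofFinite V
  have : Nonempty (G.Path x y) := h.elim fun p => ⟨p.toPath⟩
  obtain ⟨p, hp⟩ := Finite.exists_min fun p : G.Path x y => p.1.wlength w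
  refine ⟨p.1, p.2, le_antisymm ?_ (wdist_le_wlength hpos _)⟩
  exact le_wdist h fun q => (hp q.toPath).trans (q.wlength_bypass_le hpos)

section Connected

variable [Finite V] (hpos : ∀ a b, G.Adj a b → 0 < w a b) (hG : G.Connected)
include hpos hG

lemma wdist_triangle (x y z : V) : G.wdist w x z ≤ G.wdist w x y + G.wdist w y z := by
  obtain ⟨p, -, hp⟩ := exists_isPath_wlength_eq_wdist hpos (hG x y)
  obtain ⟨q, -, hq⟩ := exists_isPath_wlength_eq_wdist hpos (hG y z)
  simpa [hp, hq] using wdist_le_wlength hpos (p.append q)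

lemma wdist_pos {x y : V} (hxy : x ≠ y) : 0 < G.wdist w x y := by
  obtain ⟨p, -, hp⟩ := exists_isPath_wlength_eq_wdist hpos (hG x y)
  rw [← hp]
  cases p with
  | nil => exact absurd rfl hxy
  | cons h q =>
    rw [Walk.wlength_cons]
    exact add_pos_of_pos_of_nonneg (hpos _ _ h) (q.wlength_nonneg hpos)

lemma wdist_comm (hsymm : ∀ a b, w a b = w b a) (x y : V) :
    G.wdist w x y = G.wdist w y x := by
  have key (a b : V) : G.wdist w a b ≤ G.wdist w b a := by
    obtain ⟨p, -, hp⟩ := exists_isPath_wlength_eq_wdist hpos (hG b a)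
    refine (wdist_le_wlength hpos p.reverse).trans_eq ?_
    rw [← hp, Walk.wlength, Walk.wlength, Walk.darts_reverse, List.map_reverse,
      List.sum_reverse, List.map_map]
    exact congrArg List.sum (List.map_congr_left fun d _ => hsymm _ _)
  exact (key x y).antisymm (key y x)

end Connected

lemma wdist_le_wdist_of_le {H : SimpleGraph V} (hpos : ∀ a b, G.Adj a b → 0 < w a b)
    (hHG : H ≤ G) {x y : V} (h : H.Reachable x y) : G.wdist w x y ≤ H.wdist w x y :=
  le_wdist h fun p => (wdist_le_wlength hpos (p.mapLe hHG)).trans_eq (p.wlength_mapLe hHG)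

namespace Walk

def IsGeodesic (w : V → V → ℝ) {x y : V} (p : G.Walk x y) : Prop :=
  p.wlength w = G.wdist w x y

section Geodesic

variable [Finite V] (hpos : ∀ a b, G.Adj a b → 0 < w a b) (hG : G.Connected)
include hpos hG

lemma IsGeodesic.of_append {x y z : V} {p : G.Walk x y} {q : G.Walk y z}
    (h : (p.append q).IsGeodesic w) :
    p.IsGeodesic w ∧ q.IsGeodesic w ∧ G.wdist w x y + G.wdist w y z = G.wdist w x z := by
  unfold IsGeodesic at h ⊢
  rw [wlength_append] at h
  have := wdist_le_wlength hpos p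
  have := wdist_le_wlength hpos q
  have := wdist_triangle hpos hG x y z
  exact ⟨by linarith, by linarith, by linarith⟩

lemma IsGeodesic.takeUntil [DecidableEq V] {x y z : V} {p : G.Walk x y} (h : p.IsGeodesic w)
    (hz : z ∈ p.support) : (p.takeUntil z hz).IsGeodesic w :=
  (IsGeodesic.of_append hpos hG (p.take_spec hz ▸ h)).1

lemma IsGeodesic.take {x y : V} {p : G.Walk x y} (h : p.IsGeodesic w) (n : ℕ) :
    (p.take n).IsGeodesic w :=
  (IsGeodesic.of_append hpos hG ((p.append_take_drop_eq n).symm ▸ h)).1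

lemma IsGeodesic.wdist_add_wdist_of_mem_support {x y z : V} {p : G.Walk x y}
    (h : p.IsGeodesic w) (hz : z ∈ p.support) :
    G.wdist w x z + G.wdist w z y = G.wdist w x y := by
  classical
  exact (IsGeodesic.of_append hpos hG (p.take_spec hz ▸ h)).2.2

lemma IsGeodesic.getVert_eq_of_wdist_eq {x y : V} {p : G.Walk x y} (h : p.IsGeodesic w)
    {i j : ℕ} (hij : i ≤ j) (hd : G.wdist w x (p.getVert i) = G.wdist w x (p.getVert j)) :
    p.getVert i = p.getVert j := by
  have hi : p.getVert i ∈ (p.take j).support := by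
    simpa [hij] using (p.take j).getVert_mem_support i
  have hsplit := (h.take hpos hG j).wdist_add_wdist_of_mem_support hpos hG hi
  by_contra hne
  linarith [wdist_pos hpos hG hne]

end Geodesic

end Walk

lemma Walk.IsPath.append_of_support_inter {x y z : V} {p : G.Walk x y} {q : G.Walk y z}
    (hp : p.IsPath) (hq : q.IsPath) (h : ∀ a ∈ p.support, a ∈ q.support → a = y) :
    (p.append q).IsPath := by
  have hqnd := hq.support_nodup
  rw [← q.cons_tail_support, List.nodup_cons] at hqnd
  rw [Walk.isPath_def, Walk.support_append, List.nodup_append]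
  refine ⟨hp.support_nodup, hqnd.2, fun a ha b hb hab => ?_⟩
  subst hab
  obtain rfl := h a ha (List.mem_of_mem_tail hb)
  exact hqnd.1 hb

section Tree

variable [Finite V] {T : SimpleGraph V} (hT : T.IsTree) (hpos : ∀ a b, T.Adj a b → 0 < w a b)
include hT hpos

lemma IsTree.isGeodesic_of_isPath {x y : V} {p : T.Walk x y} (hp : p.IsPath) :
    p.IsGeodesic w := by
  obtain ⟨q, hq, hql⟩ := exists_isPath_wlength_eq_wdist hpos (hT.connected x y)
  rw [(hT.existsUnique_path x y).unique hp hq]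
  exact hql

/-- The witness is the first vertex of the path from `u` to `x` that also lies on the path from `v`
to `x`; the two paths up to it join into a path from `u` to `v`, which must be `s`. -/
lemma IsTree.exists_mem_support_wdist_add {u v : V} {s : T.Walk u v} (hs : s.IsPath) (x : V) :
    ∃ m ∈ s.support, T.wdist w u m + T.wdist w m x = T.wdist w u x ∧
      T.wdist w v m + T.wdist w m x = T.wdist w v x := by
  classical
  have hTc := hT.connected
  obtain ⟨p, hp⟩ := (hT.existsUnique_path u x).exists
  obtain ⟨q, hq⟩ := (hT.existsUnique_path v x).exists
  have hpg := hT.isGeodesic_of_isPath hpos hp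
  have hqg := hT.isGeodesic_of_isPath hpos hq
  obtain ⟨m, ⟨hmp, hmq⟩, hmin⟩ := Set.exists_min_image {y | y ∈ p.support ∧ y ∈ q.support}
    (T.wdist w u) (Set.toFinite _) ⟨x, p.end_mem_support, q.end_mem_support⟩
  have hpath : ((p.takeUntil m hmp).append (q.takeUntil m hmq).reverse).IsPath := by
    refine (hp.takeUntil hmp).append_of_support_inter (hq.takeUntil hmq).reverse
      fun y hyp hyq => ?_
    rw [Walk.support_reverse, List.mem_reverse] at hyq
    have hmy := hmin y ⟨p.support_takeUntil_subset_support hmp hyp, q.support_takeUntil_subset_support hmq hyq⟩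
    have hsplit := (hpg.takeUntil hpos hTc hmp).wdist_add_wdist_of_mem_support hpos hTc hyp
    by_contra hne
    linarith [wdist_pos hpos hTc hne]
  have hms : m ∈ s.support := by
    rw [← (hT.existsUnique_path u v).unique hpath hs, Walk.mem_support_append_iff]
    exact Or.inl (Walk.end_mem_support _)
  exact ⟨m, hms, hpg.wdist_add_wdist_of_mem_support hpos hTc hmp,
    hqg.wdist_add_wdist_of_mem_support hpos hTc hmq⟩

end Tree

lemma exists_mem_support_wdist_add_of_isTree_le [Finite V]
    (hpos : ∀ a b, G.Adj a b → 0 < w a b) (hG : G.Connected) {T : SimpleGraph V}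
    (hTG : T ≤ G) (hT : T.IsTree) {u v : V}
    (hdpu : ∀ x : V, T.wdist w u x = G.wdist w u x)
    (hdpv : ∀ x : V, T.wdist w v x = G.wdist w v x) {P : G.Walk u v}
    (hPuniq : ∀ Q : G.Walk u v, Q.IsPath → Q.IsGeodesic w → Q = P) (x : V) :
    ∃ m ∈ P.support, G.wdist w u m + G.wdist w m x = G.wdist w u x ∧
      G.wdist w v m + G.wdist w m x = G.wdist w v x := by
  have hTpos : ∀ a b, T.Adj a b → 0 < w a b := fun a b h => hpos a b (hTG h)
  obtain ⟨s, hs⟩ := (hT.existsUnique_path u v).exists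
  have hsP : s.mapLe hTG = P := by
    refine hPuniq _ (Walk.isPath_mapLe hTG |>.2 hs) ?_
    rw [Walk.IsGeodesic, Walk.wlength_mapLe, hT.isGeodesic_of_isPath hTpos hs, hdpu]
  obtain ⟨m, hm, hu, hv⟩ := hT.exists_mem_support_wdist_add hTpos hs x
  have hmx := wdist_le_wdist_of_le hpos hTG (hT.connected m x)
  rw [hdpu, hdpu] at hu
  rw [hdpv, hdpv] at hv
  refine ⟨m, ?_, ?_, ?_⟩
  · rwa [← hsP, Walk.support_mapLe_eq_support]
  · linarith [wdist_triangle hpos hG u m x]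
  · linarith [wdist_triangle hpos hG v m x]

lemma wdistS_le_wdist (hpos : ∀ a b, G.Adj a b → 0 < w a b) {S : Set V} {x z : V}
    (hz : z ∈ S) : G.wdistS w x S ≤ G.wdist w x z :=
  csInf_le ⟨0, by rintro _ ⟨y, -, rfl⟩; exact wdist_nonneg hpos x y⟩ ⟨z, hz, rfl⟩

lemma exists_mem_wdist_eq_wdistS (x : V) {S : Set V} (hS : S.Finite) (hne : S.Nonempty) :
    ∃ z ∈ S, G.wdist w x z = G.wdistS w x S :=
  (hne.image _).csInf_mem (hS.image _)

lemma Walk.IsGeodesic.getVert_eq_of_mem_Vset [Finite V] (hpos : ∀ a b, G.Adj a b → 0 < w a b)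
    (hG : G.Connected) (hsymm : ∀ a b, w a b = w b a) {u v m x : V} {P : G.Walk u v}
    (hP : P.IsGeodesic w) (hm : m ∈ P.support)
    (hu : G.wdist w u m + G.wdist w m x = G.wdist w u x)
    (hv : G.wdist w v m + G.wdist w m x = G.wdist w v x) {i : ℕ} (hx : x ∈ Vset G w P i) :
    P.getVert i = m := by
  obtain ⟨t, rfl, -⟩ := Walk.mem_support_iff_exists_getVert.1 hm
  have hyx : G.wdist w (P.getVert i) x ≤ G.wdist w (P.getVert t) x := by
    rw [wdist_comm hpos hG hsymm _ x, wdist_comm hpos hG hsymm _ x, hx]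
    exact wdistS_le_wdist hpos hm
  have hPy := hP.wdist_add_wdist_of_mem_support hpos hG (P.getVert_mem_support i)
  have hPm := hP.wdist_add_wdist_of_mem_support hpos hG hm
  rw [wdist_comm hpos hG hsymm _ v] at hPy hPm
  have hd : G.wdist w u (P.getVert i) = G.wdist w u (P.getVert t) := by
    linarith [wdist_triangle hpos hG u (P.getVert i) x, wdist_triangle hpos hG v (P.getVert i) x]
  rcases le_total i t with h | h
  · exact hP.getVert_eq_of_wdist_eq hpos hG h hd
  · exact (hP.getVert_eq_of_wdist_eq hpos hG h hd.symm).symm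

end SimpleGraph

/-- The sets `V_0, V_1, ..., V_k` are pairwise disjoint and their union is `V(G)`,
i.e. they form a partition of the vertex set of `G`. -/
theorem Vsets_partition {V : Type*} [Fintype V] (G : SimpleGraph V)
    (hG : G.Connected) (w : V → V → ℝ) (hsymm : ∀ a b : V, w a b = w b a)
    (hpos : ∀ a b : V, G.Adj a b → 0 < w a b) (u v : V)
    (T : SimpleGraph V) (hTG : T ≤ G) (hT : T.IsTree)
    (hdpu : ∀ x : V, T.wdist w u x = G.wdist w u x)
    (hdpv : ∀ x : V, T.wdist w v x = G.wdist w v x)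
    (P : G.Walk u v) (hP : P.IsPath) (hPshort : P.wlength w = G.wdist w u v)
    (hPuniq : ∀ Q : G.Walk u v, Q.IsPath → Q.wlength w = G.wdist w u v → Q = P) :
    (∀ i j : ℕ, i ≤ P.length → j ≤ P.length → i ≠ j →
        Vset G w P i ∩ Vset G w P j = ∅) ∧
      (⋃ i ∈ Set.Iic P.length, Vset G w P i) = Set.univ := by
  have hgeo : P.IsGeodesic w := hPshort
  constructor
  · intro i j hi hj hij
    refine Set.eq_empty_of_forall_notMem fun x hx => hij ?_
    obtain ⟨m, hm, hu, hv⟩ :=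
      exists_mem_support_wdist_add_of_isTree_le hpos hG hTG hT hdpu hdpv hPuniq x
    exact hP.getVert_injOn hi hj
      ((hgeo.getVert_eq_of_mem_Vset hpos hG hsymm hm hu hv hx.1).trans
        (hgeo.getVert_eq_of_mem_Vset hpos hG hsymm hm hu hv hx.2).symm)
  · refine Set.eq_univ_of_forall fun x => ?_
    obtain ⟨z, hz, hxz⟩ :=
      exists_mem_wdist_eq_wdistS x P.support.finite_toSet ⟨u, P.start_mem_support⟩
    obtain ⟨n, rfl, hn⟩ := Walk.mem_support_iff_exists_getVert.1 hz
    exact Set.mem_biUnion hn hxz
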